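/- Let X be n-Hausdorff and Y = n-κX the simple n-H-closed extension obtained by adding, for each non-full open ultrafilter U_α on X (|aU_α| < n−1), a set of n−1−|aU_α| new points each with neighborhood filter trace U_α. If Z is any n-H-closed extension of X, then there is a continuous surjection f : Y → Z with f(x) = x for all x ∈ X. -/

import Mathlib

open Set Topology Function

universe u v

/-- A space is `n`-Hausdorff if any `n` distinct points admit open neighborhoods
with empty intersection. -/
def NHausdorff (X : Type u) [TopologicalSpace X] (n : ℕ) : Prop :=
  ∀ x : Fin n → X, Function.Injective x →
    ∃ U : Fin n → Set X, (∀ i, IsOpen (U i) ∧ x i ∈ U i) ∧ (⋂ i, U i) = (∅ : Set X)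

/-- An open filter on `X`: a nonempty family of nonempty open sets closed under
finite intersections and open supersets. -/
structure IsOpenFilter {X : Type u} [TopologicalSpace X] (F : Set (Set X)) : Prop where
  nonempty : F.Nonempty
  isOpen_mem : ∀ U ∈ F, IsOpen U
  nonempty_mem : ∀ U ∈ F, U.Nonempty
  inter_mem : ∀ U ∈ F, ∀ V ∈ F, U ∩ V ∈ F
  superset_mem : ∀ U ∈ F, ∀ V : Set X, IsOpen V → U ⊆ V → V ∈ F

/-- An open ultrafilter: a maximal open filter. -/
def IsOpenUltrafilter {X : Type u} [TopologicalSpace X] (F : Set (Set X)) : Prop :=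
  IsOpenFilter F ∧ ∀ G : Set (Set X), IsOpenFilter G → F ⊆ G → G = F

/-- The adherence of a family of sets: `⋂ {cl U : U ∈ F}`. -/
def adh {X : Type u} [TopologicalSpace X] (F : Set (Set X)) : Set X :=
  ⋂ U ∈ F, closure U

/-- `X` is `n`-H-closed: `X` is `n`-Hausdorff and closed in every `n`-Hausdorff space
in which it embeds. -/
def NHClosed (X : Type u) [TopologicalSpace X] (n : ℕ) : Prop :=
  NHausdorff X n ∧
    ∀ (Z : Type u) (_ : TopologicalSpace Z) (e : X → Z),
      NHausdorff Z n → IsEmbedding e → IsClosed (Set.range e)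

lemma univ_mem_of_isOpenFilter {X : Type u} [TopologicalSpace X] {F : Set (Set X)}
    (hF : IsOpenFilter F) : Set.univ ∈ F := by
  obtain ⟨U, hU⟩ := hF.nonempty
  exact hF.superset_mem U hU Set.univ isOpen_univ (Set.subset_univ U)

/-- The non-full open ultrafilters on `X`: those with fewer than `n-1` adherent points. -/
def NonFullUlt (X : Type u) [TopologicalSpace X] (n : ℕ) : Type u :=
  {F : Set (Set X) // IsOpenUltrafilter F ∧ (adh F).encard < (n - 1 : ℕ)}

/-- The points added to `X` to form `n-κX`: for each non-full open ultrafilter `U`,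
a set of `n - 1 - |aU|` new points. -/
def KPoints (X : Type u) [TopologicalSpace X] (n : ℕ) : Type u :=
  Σ F : NonFullUlt X n, Fin (n - 1 - (adh F.val).ncard)

/-- The underlying set of the Katětov-type extension `n-κX`. -/
def nKatetov (X : Type u) [TopologicalSpace X] (n : ℕ) : Type u :=
  X ⊕ KPoints X n

/-- The topology of `n-κX`: `V` is open iff `V ∩ X` is open in `X` and each added point
`p` (associated to the ultrafilter `p.1`) in `V` satisfies `V ∩ X ∈ p.1`. -/
def nKatetovTop (X : Type u) [TopologicalSpace X] (n : ℕ) :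
    TopologicalSpace (nKatetov X n) where
  IsOpen V := IsOpen (Sum.inl ⁻¹' V : Set X) ∧
    ∀ p : KPoints X n, Sum.inr p ∈ V → Sum.inl ⁻¹' V ∈ p.1.val
  isOpen_univ := by
    exact ⟨isOpen_univ, fun p _ => univ_mem_of_isOpenFilter p.1.property.1.1⟩
  isOpen_inter := by
    rintro s t ⟨hs1, hs2⟩ ⟨ht1, ht2⟩
    exact ⟨hs1.inter ht1, fun p hp => p.1.property.1.1.inter_mem _ (hs2 p hp.1) _ (ht2 p hp.2)⟩
  isOpen_sUnion := by
    intro S hS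
    have hop : IsOpen (Sum.inl ⁻¹' ⋃₀ S : Set X) := by
      have heq : (Sum.inl ⁻¹' ⋃₀ S : Set X) = ⋃ s ∈ S, (Sum.inl ⁻¹' s : Set X) := by
        ext x
        exact ⟨fun ⟨s, hsS, hx⟩ => Set.mem_iUnion₂.2 ⟨s, hsS, hx⟩,
          fun h => by obtain ⟨s, hsS, hx⟩ := Set.mem_iUnion₂.1 h; exact ⟨s, hsS, hx⟩⟩
      rw [heq]
      exact isOpen_biUnion fun s hs => (hS s hs).1
    refine ⟨hop, ?_⟩
    rintro p ⟨s, hsS, hps⟩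
    exact p.1.property.1.1.superset_mem _ ((hS s hsS).2 p hps) _ hop
      (fun x hx => ⟨s, hsS, hx⟩)

open Filter

/-!
Along the dense embedding `e`, an open ultrafilter `U` on `X` pushes forward to an open
ultrafilter on `Z`. Since `Z` is `n`-H-closed this has an adherent point, and since `Z` is
`n`-Hausdorff it has at most `n - 1` of them; those lying in `X` are exactly the adherent points
of `U`. So for non-full `U` the others can be listed by the `n - 1 - |aU|` points added for `U`
(padded with any adherent point), and the resulting map is continuous because an open
ultrafilter contains every open neighbourhood of its adherent points. A point `z ∉ X` adheres
to the pushforward of any open ultrafilter refining the trace on `X` of its neighbourhoods;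
that ultrafilter is then non-full, so `z` is hit.
-/

lemma Set.Finite.exists_fin_covering {α : Type*} {S T : Set α} (hS : S.Finite) (hST : S ⊆ T)
    (hT : T.Nonempty) {k : ℕ} (hk : S.ncard ≤ k) :
    ∃ g : Fin k → α, range g ⊆ T ∧ S ⊆ range g := by
  obtain ⟨t, ht⟩ := hT
  set l := hS.toFinset.toList
  have hl : l.length = S.ncard := by simp [l, ncard_eq_toFinset_card S hS]
  refine ⟨fun i => l.getD i t, ?_, fun s hs => ?_⟩
  · rintro _ ⟨i, rfl⟩
    dsimp only
    rcases lt_or_ge (i : ℕ) l.length with hi | hi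
    · rw [List.getD_eq_getElem _ _ hi]
      exact hST ((hS.mem_toFinset).1 (Finset.mem_toList.1 (List.getElem_mem hi)))
    · rwa [List.getD_eq_default _ _ hi]
  · obtain ⟨i, hi, rfl⟩ := List.mem_iff_getElem.1 (Finset.mem_toList.2 (hS.mem_toFinset.2 hs))
    change i < l.length at hi
    exact ⟨⟨i, by omega⟩, List.getD_eq_getElem _ _ hi⟩

section OpenFilter

variable {X : Type*} [TopologicalSpace X]

lemma IsOpenFilter.iInter_mem {F : Set (Set X)} (hF : IsOpenFilter F) {ι : Type*} [Finite ι]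
    {A : ι → Set X} (h : ∀ i, A i ∈ F) : (⋂ i, A i) ∈ F := by
  classical
  cases nonempty_fintype ι
  have hfin : ∀ s : Finset ι, (⋂ i ∈ s, A i) ∈ F := by
    intro s
    induction s using Finset.induction_on with
    | empty => simpa using univ_mem_of_isOpenFilter hF
    | insert a s _ ih =>
      rw [Finset.set_biInter_insert]
      exact hF.inter_mem _ (h a) _ ih
  simpa using hfin Finset.univ

lemma IsOpenFilter.exists_subset_isOpenUltrafilter {F : Set (Set X)} (hF : IsOpenFilter F) :
    ∃ G, IsOpenUltrafilter G ∧ F ⊆ G := by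
  have hchain : ∀ c ⊆ {G : Set (Set X) | IsOpenFilter G}, IsChain (· ⊆ ·) c → c.Nonempty →
      ∃ ub ∈ {G : Set (Set X) | IsOpenFilter G}, ∀ s ∈ c, s ⊆ ub := by
    intro c hc hc_chain ⟨G₀, hG₀⟩
    refine ⟨⋃₀ c, ?_, fun s hs => subset_sUnion_of_mem hs⟩
    constructor
    · obtain ⟨U, hU⟩ := (hc hG₀).nonempty
      exact ⟨U, G₀, hG₀, hU⟩
    · rintro U ⟨G, hG, hU⟩
      exact (hc hG).isOpen_mem U hU
    · rintro U ⟨G, hG, hU⟩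
      exact (hc hG).nonempty_mem U hU
    · rintro U ⟨G₁, hG₁, hU⟩ V ⟨G₂, hG₂, hV⟩
      rcases hc_chain.total hG₁ hG₂ with h₁₂ | h₂₁
      · exact ⟨G₂, hG₂, (hc hG₂).inter_mem _ (h₁₂ hU) _ hV⟩
      · exact ⟨G₁, hG₁, (hc hG₁).inter_mem _ hU _ (h₂₁ hV)⟩
    · rintro U ⟨G, hG, hU⟩ V hV hUV
      exact ⟨G, hG, (hc hG).superset_mem _ hU _ hV hUV⟩
  obtain ⟨m, hFm, hm⟩ := zorn_subset_nonempty _ hchain F hF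
  exact ⟨m, ⟨hm.1, fun G hG hmG => (hm.2 hG hmG).antisymm hmG⟩, hFm⟩

lemma IsOpenUltrafilter.mem_of_forall_inter_nonempty {F : Set (Set X)}
    (hF : IsOpenUltrafilter F) {V : Set X} (hV : IsOpen V)
    (h : ∀ W ∈ F, (V ∩ W).Nonempty) : V ∈ F := by
  set G : Set (Set X) := {W | IsOpen W ∧ ∃ W' ∈ F, V ∩ W' ⊆ W}
  have hG : IsOpenFilter G := by
    constructor
    · exact ⟨V, hV, univ, univ_mem_of_isOpenFilter hF.1, inter_subset_left⟩
    · exact fun U hU => hU.1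
    · rintro U ⟨-, W, hW, hsub⟩
      exact (h W hW).mono hsub
    · rintro U ⟨hU, W₁, hW₁, h₁⟩ U' ⟨hU', W₂, hW₂, h₂⟩
      refine ⟨hU.inter hU', W₁ ∩ W₂, hF.1.inter_mem _ hW₁ _ hW₂, ?_⟩
      rintro x ⟨hx, hx₁, hx₂⟩
      exact ⟨h₁ ⟨hx, hx₁⟩, h₂ ⟨hx, hx₂⟩⟩
    · rintro U ⟨-, W, hW, hsub⟩ U' hU' hUU'
      exact ⟨hU', W, hW, hsub.trans hUU'⟩
  have hFG : F ⊆ G := fun U hU => ⟨hF.1.isOpen_mem U hU, U, hU, inter_subset_right⟩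
  rw [← hF.2 G hG hFG]
  exact ⟨hV, univ, univ_mem_of_isOpenFilter hF.1, inter_subset_left⟩

lemma mem_adh_iff {F : Set (Set X)} {z : X} : z ∈ adh F ↔ ∀ U ∈ F, z ∈ closure U := by
  simp [adh]

lemma IsOpenUltrafilter.mem_of_mem_adh {F : Set (Set X)} (hF : IsOpenUltrafilter F)
    {z : X} (hz : z ∈ adh F) {V : Set X} (hV : IsOpen V) (hzV : z ∈ V) : V ∈ F :=
  hF.mem_of_forall_inter_nonempty hV fun W hW =>
    mem_closure_iff.1 (mem_adh_iff.1 hz W hW) V hV hzV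

def openTrace (f : Filter X) : Set (Set X) :=
  {U | IsOpen U ∧ U ∈ f}

lemma isOpenFilter_openTrace (f : Filter X) [f.NeBot] : IsOpenFilter (openTrace f) where
  nonempty := ⟨univ, isOpen_univ, univ_mem⟩
  isOpen_mem _ hU := hU.1
  nonempty_mem _ hU := nonempty_of_mem hU.2
  inter_mem _ hU _ hV := ⟨hU.1.inter hV.1, inter_mem hU.2 hV.2⟩
  superset_mem _ hU _ hV hUV := ⟨hV, mem_of_superset hU.2 hUV⟩

end OpenFilter

section NHausdorff

variable {Y Z : Type*} [TopologicalSpace Y] [TopologicalSpace Z] {n : ℕ}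

lemma NHausdorff.encard_adh_le (hZ : NHausdorff Z n) {G : Set (Set Z)}
    (hG : IsOpenUltrafilter G) : (adh G).encard ≤ (n - 1 : ℕ) := by
  by_contra! h
  have hn : (n : ℕ∞) ≤ (n - 1 : ℕ) + 1 := by norm_cast; omega
  obtain ⟨t, hts, ht⟩ := exists_subset_encard_eq (hn.trans (Order.add_one_le_of_lt h))
  have : Finite t := finite_of_encard_eq_coe ht
  have hcard : Nat.card t = n := by rw [Nat.card_coe_set_eq, ncard_def, ht]; rfl
  set E := (Finite.equivFinOfCardEq hcard).symm
  obtain ⟨U, hU, hempty⟩ := hZ (fun i => E i) (Subtype.val_injective.comp E.injective)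
  have hmem : (⋂ i, U i) ∈ G :=
    hG.1.iInter_mem fun i => hG.mem_of_mem_adh (hts (E i).2) (hU i).1 (hU i).2
  simpa [hempty] using hG.1.nonempty_mem _ hmem

lemma exists_iInter_eq_empty_of_disjoint {ι : Type*} [DecidableEq ι] {x : ι → Y} {i j : ι}
    (hij : i ≠ j) {U V : Set Y} (hU : IsOpen U) (hV : IsOpen V) (hxU : x i ∈ U) (hxV : x j ∈ V)
    (hUV : Disjoint U V) :
    ∃ W : ι → Set Y, (∀ k, IsOpen (W k) ∧ x k ∈ W k) ∧ (⋂ k, W k) = ∅ := by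
  refine ⟨fun k => if k = i then U else if k = j then V else univ, fun k => ?_, ?_⟩
  · dsimp only
    split_ifs with hki hkj
    · exact ⟨hU, hki ▸ hxU⟩
    · exact ⟨hV, hkj ▸ hxV⟩
    · exact ⟨isOpen_univ, mem_univ _⟩
  · refine eq_empty_of_subset_empty fun y hy => hUV.le_bot ⟨?_, ?_⟩
    · simpa using mem_iInter.1 hy i
    · simpa [hij.symm] using mem_iInter.1 hy j

lemma NHausdorff.exists_of_isOpenEmbedding (hZ : NHausdorff Z n) (hn : n ≠ 0) {e : Z → Y}
    (he : IsOpenEmbedding e) {z : Fin n → Z} (hz : Injective z) :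
    ∃ W : Fin n → Set Y, (∀ k, IsOpen (W k) ∧ e (z k) ∈ W k) ∧ (⋂ k, W k) = ∅ := by
  have : NeZero n := ⟨hn⟩
  obtain ⟨U, hU, hempty⟩ := hZ z hz
  refine ⟨fun k => e '' U k, fun k => ⟨he.isOpenMap _ (hU k).1, mem_image_of_mem e (hU k).2⟩, ?_⟩
  rw [← he.injective.injOn.image_iInter_eq, hempty, image_empty]

end NHausdorff

section AdjoinPoint

variable {Z : Type*} [TopologicalSpace Z]

abbrev adjoinPointTop (G : Set (Set Z)) (hG : IsOpenFilter G) : TopologicalSpace (Option Z) where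
  IsOpen V := IsOpen (some ⁻¹' V) ∧ (none ∈ V → some ⁻¹' V ∈ G)
  isOpen_univ := ⟨isOpen_univ, fun _ => univ_mem_of_isOpenFilter hG⟩
  isOpen_inter _ _ hs ht := ⟨hs.1.inter ht.1, fun h => hG.inter_mem _ (hs.2 h.1) _ (ht.2 h.2)⟩
  isOpen_sUnion S hS := by
    have hopen : IsOpen (some ⁻¹' ⋃₀ S) := by
      rw [preimage_sUnion]
      exact isOpen_biUnion fun s hs => (hS s hs).1
    refine ⟨hopen, fun ⟨s, hs, hns⟩ => ?_⟩
    exact hG.superset_mem _ ((hS s hs).2 hns) _ hopen (preimage_mono (subset_sUnion_of_mem hs))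

variable {G : Set (Set Z)} (hG : IsOpenFilter G)

lemma isOpen_image_some_adjoinPointTop {U : Set Z} (hU : IsOpen U) :
    IsOpen[adjoinPointTop G hG] (some '' U) :=
  ⟨by rwa [preimage_image_eq U (Option.some_injective Z)], fun h => by simp at h⟩

lemma isOpen_insert_none_adjoinPointTop {U : Set Z} (hU : U ∈ G) :
    IsOpen[adjoinPointTop G hG] (insert none (some '' U)) := by
  have hpre : some ⁻¹' insert none (some '' U) = U := by ext; simp
  exact ⟨by rw [hpre]; exact hG.isOpen_mem U hU, fun _ => by rw [hpre]; exact hU⟩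

lemma isOpenEmbedding_some_adjoinPointTop :
    @IsOpenEmbedding Z (Option Z) _ (adjoinPointTop G hG) some :=
  let := adjoinPointTop G hG
  .of_continuous_injective_isOpenMap (continuous_def.2 fun _ hV => hV.1)
    (Option.some_injective Z) fun _ hU => isOpen_image_some_adjoinPointTop hG hU

lemma none_mem_closure_adjoinPointTop :
    none ∈ closure[adjoinPointTop G hG] (range some) := by
  let := adjoinPointTop G hG
  refine mem_closure_iff.2 fun V hV hnone => ?_
  obtain ⟨z, hz⟩ := hG.nonempty_mem _ (hV.2 hnone)
  exact ⟨some z, hz, z, rfl⟩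

lemma nHausdorff_adjoinPointTop {n : ℕ} (hn : 2 ≤ n) (hZ : NHausdorff Z n) (hadh : adh G = ∅) :
    @NHausdorff (Option Z) (adjoinPointTop G hG) n := by
  let := adjoinPointTop G hG
  intro x hx
  by_cases hnone : ∃ j, x j = none
  · obtain ⟨j, hj⟩ := hnone
    have : Nontrivial (Fin n) := Fin.nontrivial_iff_two_le.2 hn
    obtain ⟨i, hij⟩ := exists_ne j
    obtain ⟨w, hw⟩ := Option.ne_none_iff_exists'.1 (hj ▸ hx.ne hij)
    obtain ⟨U, hUG, hwU⟩ : ∃ U ∈ G, w ∉ closure U := by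
      have hw_adh : w ∉ adh G := by simp [hadh]
      simpa [mem_adh_iff] using hw_adh
    refine exists_iInter_eq_empty_of_disjoint hij
      (isOpen_image_some_adjoinPointTop hG isClosed_closure.isOpen_compl)
      (isOpen_insert_none_adjoinPointTop hG hUG) (hw ▸ mem_image_of_mem some hwU)
      (hj ▸ mem_insert _ _) ?_
    refine disjoint_left.2 ?_
    rintro _ ⟨a, ha, rfl⟩ h
    exact ha (subset_closure (by simpa using h))
  · choose z hz using fun i => Option.ne_none_iff_exists'.1 fun h => hnone ⟨i, h⟩
    obtain rfl : x = some ∘ z := funext hz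
    exact hZ.exists_of_isOpenEmbedding (by omega) (isOpenEmbedding_some_adjoinPointTop hG)
      hx.of_comp

end AdjoinPoint

/-- Otherwise `Z`, with a point adjoined along `G`, would be `n`-Hausdorff and `Z` not closed
in it. -/
lemma NHClosed.adh_nonempty {Z : Type*} [TopologicalSpace Z] {n : ℕ} (hn : 2 ≤ n)
    (hZ : NHClosed Z n) {G : Set (Set Z)} (hG : IsOpenFilter G) : (adh G).Nonempty := by
  by_contra! hadh
  let := adjoinPointTop G hG
  have hclosed : IsClosed (range (some : Z → Option Z)) :=
    hZ.2 _ _ some (nHausdorff_adjoinPointTop hG hn hZ.1 hadh)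
      (isOpenEmbedding_some_adjoinPointTop hG).isEmbedding
  obtain ⟨z, hz⟩ := hclosed.closure_subset (none_mem_closure_adjoinPointTop hG)
  exact Option.some_ne_none z hz

section PushOpen

variable {X Z : Type*} [TopologicalSpace X] [TopologicalSpace Z] {e : X → Z}

def pushOpen (e : X → Z) (F : Set (Set X)) : Set (Set Z) :=
  {W | IsOpen W ∧ e ⁻¹' W ∈ F}

lemma isOpenFilter_pushOpen (he : Continuous e) {F : Set (Set X)} (hF : IsOpenFilter F) :
    IsOpenFilter (pushOpen e F) where
  nonempty := ⟨univ, isOpen_univ, univ_mem_of_isOpenFilter hF⟩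
  isOpen_mem _ hW := hW.1
  nonempty_mem _ hW := (hF.nonempty_mem _ hW.2).image e |>.mono (image_preimage_subset e _)
  inter_mem _ hW _ hV := ⟨hW.1.inter hV.1, hF.inter_mem _ hW.2 _ hV.2⟩
  superset_mem _ hW _ hV hWV :=
    ⟨hV, hF.superset_mem _ hW.2 _ (hV.preimage he) (preimage_mono hWV)⟩

lemma isOpenUltrafilter_pushOpen (he : IsDenseEmbedding e) {F : Set (Set X)}
    (hF : IsOpenUltrafilter F) : IsOpenUltrafilter (pushOpen e F) := by
  refine ⟨isOpenFilter_pushOpen he.continuous hF.1, fun H hH hFH => ?_⟩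
  refine Subset.antisymm (fun W hW => ⟨hH.isOpen_mem W hW, ?_⟩) hFH
  refine hF.mem_of_forall_inter_nonempty ((hH.isOpen_mem W hW).preimage he.continuous)
    fun U hU => ?_
  obtain ⟨W', hW', rfl⟩ := he.isInducing.isOpen_iff.1 (hF.1.isOpen_mem U hU)
  have hWW' : W ∩ W' ∈ H := hH.inter_mem _ hW _ (hFH ⟨hW', hU⟩)
  obtain ⟨x, hx⟩ := he.dense.exists_mem_open (hH.isOpen_mem _ hWW') (hH.nonempty_mem _ hWW')
  exact ⟨x, hx⟩

lemma adh_pushOpen_inter_range (he : IsDenseEmbedding e) {F : Set (Set X)}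
    (hF : IsOpenFilter F) : adh (pushOpen e F) ∩ range e = e '' adh F := by
  refine Subset.antisymm ?_ ?_
  · rintro _ ⟨hx, x, rfl⟩
    refine ⟨x, mem_adh_iff.2 fun U hU => ?_, rfl⟩
    obtain ⟨W, hW, rfl⟩ := he.isInducing.isOpen_iff.1 (hF.isOpen_mem U hU)
    have hxW : e x ∈ closure W := mem_adh_iff.1 hx W ⟨hW, hU⟩
    refine mem_closure_iff.2 fun O hO hxO => ?_
    obtain ⟨O', hO', rfl⟩ := he.isInducing.isOpen_iff.1 hO
    obtain ⟨y, hyO', hyW⟩ := he.dense.exists_mem_open (hO'.inter hW)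
      (mem_closure_iff.1 hxW O' hO' hxO)
    exact ⟨y, hyO', hyW⟩
  · rintro _ ⟨x, hx, rfl⟩
    exact ⟨mem_adh_iff.2 fun W hW =>
      he.continuous.closure_preimage_subset W (mem_adh_iff.1 hx _ hW.2), x, rfl⟩

lemma encard_adh_pushOpen_diff_range_add (he : IsDenseEmbedding e) {F : Set (Set X)}
    (hF : IsOpenFilter F) :
    (adh (pushOpen e F) \ range e).encard + (adh F).encard = (adh (pushOpen e F)).encard := by
  rw [← encard_sdiff_add_encard_inter (adh (pushOpen e F)) (range e),
    adh_pushOpen_inter_range he hF, he.injective.injOn.encard_image]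

lemma exists_isOpenUltrafilter_mem_adh_pushOpen (he : IsDenseEmbedding e) (z : Z) :
    ∃ F, IsOpenUltrafilter F ∧ z ∈ adh (pushOpen e F) := by
  have := he.comap_nhds_neBot z
  obtain ⟨F, hF, hsub⟩ := (isOpenFilter_openTrace (comap e (𝓝 z))).exists_subset_isOpenUltrafilter
  refine ⟨F, hF, mem_adh_iff.2 fun W hW => mem_closure_iff.2 fun V hV hzV => ?_⟩
  have hVF : e ⁻¹' V ∈ F :=
    hsub ⟨hV.preimage he.continuous, preimage_mem_comap (hV.mem_nhds hzV)⟩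
  obtain ⟨x, hxV, hxW⟩ := hF.1.nonempty_mem _ (hF.1.inter_mem _ hVF _ hW.2)
  exact ⟨e x, hxV, hxW⟩

lemma encard_adh_lt_of_mem_adh_pushOpen {n : ℕ} (hZ : NHausdorff Z n) (he : IsDenseEmbedding e)
    {F : Set (Set X)} (hF : IsOpenUltrafilter F) {z : Z} (hz : z ∈ adh (pushOpen e F))
    (hzr : z ∉ range e) : (adh F).encard < (n - 1 : ℕ) := by
  have hsum := encard_adh_pushOpen_diff_range_add he hF.1
  have hle := hZ.encard_adh_le (isOpenUltrafilter_pushOpen he hF)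
  have hdiff : 1 ≤ (adh (pushOpen e F) \ range e).encard :=
    one_le_encard_iff_nonempty.2 ⟨z, hz, hzr⟩
  have hF_le : (adh F).encard + 1 ≤ (n - 1 : ℕ) := by
    calc (adh F).encard + 1 ≤ (adh (pushOpen e F) \ range e).encard + (adh F).encard := by
          rw [add_comm]; gcongr
      _ ≤ (n - 1 : ℕ) := hsum ▸ hle
  have hF_ne_top : (adh F).encard ≠ ⊤ :=
    ne_top_of_le_ne_top (ENat.natCast_ne_top _) (le_self_add.trans hF_le)
  exact (ENat.add_one_le_iff hF_ne_top).1 hF_le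

end PushOpen

lemma exists_fin_covering_adh_pushOpen {X Z : Type u} [TopologicalSpace X] [TopologicalSpace Z]
    {n : ℕ} {e : X → Z} (hn : 2 ≤ n) (hZ : NHClosed Z n)
    (he : IsDenseEmbedding e) (F : NonFullUlt X n) :
    ∃ g : Fin (n - 1 - (adh F.val).ncard) → Z,
      range g ⊆ adh (pushOpen e F.val) ∧ adh (pushOpen e F.val) \ range e ⊆ range g := by
  have hG := isOpenUltrafilter_pushOpen he F.2.1
  have hsum := encard_adh_pushOpen_diff_range_add he F.2.1.1
  have hle := hZ.1.encard_adh_le hG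
  have hfin : (adh (pushOpen e F.val)).Finite := finite_of_encard_le_coe hle
  have hF_fin : (adh F.val).Finite := finite_of_encard_le_coe F.2.2.le
  refine hfin.sdiff.exists_fin_covering sdiff_subset (hZ.adh_nonempty hn hG.1) ?_
  rw [← hfin.sdiff.cast_ncard_eq, ← hF_fin.cast_ncard_eq, ← hfin.cast_ncard_eq] at hsum
  rw [← hfin.cast_ncard_eq] at hle
  norm_cast at hsum hle
  omega

theorem stmt16_general {X Z : Type u} [TopologicalSpace X] [TopologicalSpace Z]
    (n : ℕ) (hn : 2 ≤ n)
    (e : X → Z) (he : IsEmbedding e) (hd : Dense (Set.range e))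
    (hZ : NHClosed Z n) :
    ∃ f : nKatetov X n → Z,
      Continuous[nKatetovTop X n, _] f ∧ Function.Surjective f ∧
        ∀ x : X, f (Sum.inl x) = e x := by
  have hde : IsDenseEmbedding e := ⟨⟨he.isInducing, hd⟩, he.injective⟩
  choose g hg hcover using exists_fin_covering_adh_pushOpen hn hZ hde
  refine ⟨Sum.elim e fun p => g p.1 p.2, ?_, fun z => ?_, fun _ => rfl⟩
  · let := nKatetovTop X n
    refine continuous_def.2 fun W hW => ⟨hW.preimage he.continuous, fun p hp => ?_⟩
    exact ((isOpenUltrafilter_pushOpen hde p.1.2.1).mem_of_mem_adh (hg p.1 ⟨p.2, rfl⟩) hW hp).2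
  by_cases hz : z ∈ range e
  · obtain ⟨x, rfl⟩ := hz
    exact ⟨Sum.inl x, rfl⟩
  obtain ⟨F, hF, hzF⟩ := exists_isOpenUltrafilter_mem_adh_pushOpen hde z
  let U : NonFullUlt X n := ⟨F, hF, encard_adh_lt_of_mem_adh_pushOpen hZ.1 hde hF hzF hz⟩
  obtain ⟨i, hi⟩ := hcover U ⟨hzF, hz⟩
  exact ⟨Sum.inr ⟨U, i⟩, hi⟩

theorem stmt16 {X Z : Type u} [TopologicalSpace X] [TopologicalSpace Z]
    (n : ℕ) (hn : 2 ≤ n) (hX : NHausdorff X n)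
    (e : X → Z) (he : IsEmbedding e) (hd : Dense (Set.range e))
    (hZ : NHClosed Z n) :
    ∃ f : nKatetov X n → Z,
      Continuous[nKatetovTop X n, _] f ∧ Function.Surjective f ∧
        ∀ x : X, f (Sum.inl x) = e x :=
  stmt16_general n hn e he hd hZ
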